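/- Let Q be a comonad on a complete category C whose underlying endofunctor preserves equalizers of coreflexive pairs. Then the category Coalg(Q) of Q-coalgebras is complete (has all small limits). -/

import Mathlib

/-!
The forgetful functor `U : Coalg(Q) ⥤ C` creates equalizers of coreflexive pairs, since `Q` and
`Q ∘ Q` preserve them. Hence `Coalg(Q)` has coreflexive equalizers, and `U` is a left adjoint which
reflects isomorphisms and preserves coreflexive equalizers. These properties pass to postcomposition
with `U` on `J`-diagrams, which is therefore comonadic by the crude comonadicity theorem. The square
`const ⋙ (U ∘ -) ≅ U ⋙ const` then lifts the right adjoint `lim ⋙ cofree` of `U ⋙ const` to a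
right adjoint of `const : Coalg(Q) ⥤ (J ⥤ Coalg(Q))`, i.e. to limits of shape `J`.
-/

open CategoryTheory CategoryTheory.Limits

universe v u

variable {C : Type u} [Category.{v} C]

namespace CategoryTheory

variable {D : Type*} [Category D]

theorem IsCoreflexivePair.map {A B : C} {f g : A ⟶ B} (h : IsCoreflexivePair f g) (F : C ⥤ D) :
    IsCoreflexivePair (F.map f) (F.map g) :=
  .mk' (F.map (commonRetraction f g)) (by simp [← F.map_comp]) (by simp [← F.map_comp])

theorem IsCoreflexivePair.app {J : Type*} [Category J] {X Y : J ⥤ C} {φ ψ : X ⟶ Y}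
    (h : IsCoreflexivePair φ ψ) (j : J) : IsCoreflexivePair (φ.app j) (ψ.app j) :=
  .mk' ((commonRetraction φ ψ).app j) (by simp [← NatTrans.comp_app])
    (by simp [← NatTrans.comp_app])

namespace Limits

theorem hasLimit_of_isCoreflexivePair [HasCoreflexiveEqualizers C] (K : WalkingParallelPair ⥤ C)
    [IsCoreflexivePair (K.map .left) (K.map .right)] : HasLimit K :=
  hasLimit_of_iso (diagramIsoParallelPair K).symm

theorem hasLimit_parallelPair_comp [HasCoreflexiveEqualizers D] {A B : C} {f g : A ⟶ B}
    (h : IsCoreflexivePair f g) (F : C ⥤ D) : HasLimit (parallelPair f g ⋙ F) :=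
  have : IsCoreflexivePair ((parallelPair f g ⋙ F).map .left)
      ((parallelPair f g ⋙ F).map .right) := h.map F
  hasLimit_of_isCoreflexivePair _

end Limits

namespace Comonad

theorem preservesLimit_of_isCoreflexivePair (G : C ⥤ D) [PreservesLimitOfIsCoreflexivePair G]
    (K : WalkingParallelPair ⥤ C) [IsCoreflexivePair (K.map .left) (K.map .right)] :
    PreservesLimit K G :=
  preservesLimit_of_iso_diagram G (diagramIsoParallelPair K).symm

section Coalgebra

variable (Q : Comonad C) [PreservesLimitOfIsCoreflexivePair (Q : C ⥤ C)]

noncomputable instance forgetCreatesLimitOfIsCoreflexivePair {X Y : Q.Coalgebra} (f g : X ⟶ Y)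
    [h : IsCoreflexivePair f g] : CreatesLimit (parallelPair f g) Q.forget :=
  let K := parallelPair f g ⋙ Q.forget
  have : IsCoreflexivePair (K.map .left) (K.map .right) := h.map Q.forget
  have : IsCoreflexivePair ((K ⋙ Q.toFunctor).map .left) ((K ⋙ Q.toFunctor).map .right) :=
    (h.map Q.forget).map Q.toFunctor
  have := preservesLimit_of_isCoreflexivePair Q.toFunctor K
  have := preservesLimit_of_isCoreflexivePair Q.toFunctor (K ⋙ Q.toFunctor)
  forgetCreatesLimit _

variable [HasCoreflexiveEqualizers C]

instance : HasCoreflexiveEqualizers Q.Coalgebra where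
  has_eq _ _ _ _ h :=
    have := hasLimit_parallelPair_comp h Q.forget
    hasLimit_of_created _ Q.forget

instance : PreservesLimitOfIsCoreflexivePair Q.forget where
  out _ _ _ _ h :=
    have := hasLimit_parallelPair_comp h Q.forget
    inferInstance

end Coalgebra

section Diagrams

variable {J : Type*} [Category J] [HasCoreflexiveEqualizers D]

theorem hasLimit_flip_obj_parallelPair {X Y : J ⥤ D} {φ ψ : X ⟶ Y} (h : IsCoreflexivePair φ ψ)
    (j : J) : HasLimit ((parallelPair φ ψ).flip.obj j) :=
  have : IsCoreflexivePair (((parallelPair φ ψ).flip.obj j).map .left)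
      (((parallelPair φ ψ).flip.obj j).map .right) := h.app j
  hasLimit_of_isCoreflexivePair _

instance : HasCoreflexiveEqualizers (J ⥤ D) where
  has_eq _ _ _ _ h :=
    have := hasLimit_flip_obj_parallelPair h
    inferInstance

instance (U : D ⥤ C) [PreservesLimitOfIsCoreflexivePair U] :
    PreservesLimitOfIsCoreflexivePair ((Functor.whiskeringRight J D C).obj U) where
  out _ _ φ ψ h := by
    refine preservesLimit_of_evaluation _ _ fun j => ?_
    have := hasLimit_flip_obj_parallelPair h
    have : IsCoreflexivePair ((parallelPair φ ψ ⋙ (evaluation J D).obj j).map .left)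
        ((parallelPair φ ψ ⋙ (evaluation J D).obj j).map .right) := h.app j
    have := preservesLimit_of_isCoreflexivePair U (parallelPair φ ψ ⋙ (evaluation J D).obj j)
    -- `(U ∘ -) ⋙ evaluation j` is definitionally `evaluation j ⋙ U`.
    exact (inferInstance : PreservesLimit (parallelPair φ ψ) ((evaluation J D).obj j ⋙ U))

noncomputable instance comonadicLeftAdjointWhiskeringRight (U : D ⥤ C) [U.IsLeftAdjoint]
    [U.ReflectsIsomorphisms] [PreservesLimitOfIsCoreflexivePair U] :
    ComonadicLeftAdjoint ((Functor.whiskeringRight J D C).obj U) :=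
  comonadicOfHasPreservesCoreflexiveEqualizersOfReflectsIsomorphisms
    ((Adjunction.ofIsLeftAdjoint U).whiskerRight J)

theorem hasLimitsOfShape_of_preservesLimitOfIsCoreflexivePair (U : D ⥤ C) [U.IsLeftAdjoint]
    [U.ReflectsIsomorphisms] [PreservesLimitOfIsCoreflexivePair U] [HasLimitsOfShape J C] :
    HasLimitsOfShape J D := by
  rw [hasLimitsOfShape_iff_isLeftAdjoint_const] at *
  exact isLeftAdjoint_square_lift_comonadic _ _ U _ (Functor.compConstIso J U)

end Diagrams

end Comonad

end CategoryTheory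

/-- if `C` is complete and the comonad `Q` preserves equalizers of
coreflexive pairs, then the category of `Q`-coalgebras is complete. -/
theorem coalgebra_hasLimits (Q : Comonad C) [HasLimits C]
    (hQ : ∀ ⦃A B : C⦄ (f g : A ⟶ B), IsCoreflexivePair f g →
      PreservesLimit (parallelPair f g) (Q : C ⥤ C)) :
    HasLimits Q.Coalgebra :=
  have : Comonad.PreservesLimitOfIsCoreflexivePair (Q : C ⥤ C) := ⟨fun _ _ f g h => hQ f g h⟩
  ⟨fun _ _ => Comonad.hasLimitsOfShape_of_preservesLimitOfIsCoreflexivePair Q.forget⟩
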